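/- Under the same hypotheses as in the convergence theorem for the auxiliary variables (namely: M ≥ 1, m ≥ 2, nonzero complex numbers r_1, …, r_m with |r_1| > … > |r_m|; for every k ≥ 0, a_k^{(n)} = Σ_{ℓ=1}^{m} c_{ℓ,k} r_ℓ^{n+k+1} + b_k^{(n)} with nonzero c_{ℓ,k}, |b_k^{(n)}| ≤ μ_k ρ_k^n, 0 < ρ_k < |r_m|, μ_k > 0; and all leading constants c_{k,j} for 0 ≤ k ≤ M, 0 ≤ j ≤ m are nonzero), for every i = 0, 1, …, M−1 and j = 1, 2, …, m−1 there exist a constant K > 0 and an integer N such that for all n ≥ N the denominators C_{i,j}^{(n)} and C_{i+1,j}^{(n)} are nonzero and |C_{i,j+1}^{(n)} C_{i+1,j−1}^{(n)} / (C_{i,j}^{(n)} C_{i+1,j}^{(n)})| ≤ K (|r_{j+1}|/|r_j|)^n. -/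

import Mathlib

/-- The Casorati determinant: `C_{k,0}^{(n)} = 1` and for `j ≥ 1`,
`C_{k,j}^{(n)} = det (a_{k+ℓ}^{(n+s)})_{s,ℓ = 0,…,j-1}`. -/
noncomputable def casorati (a : ℕ → ℕ → ℂ) (k j n : ℕ) : ℂ :=
  Matrix.det (Matrix.of fun s ℓ : Fin j => a (k + (ℓ : ℕ)) (n + (s : ℕ)))

/-- The leading constant `c_{k,j} = Σ_{κ ∈ {1,…,j}^j} det M_κ`, where the `(s,ℓ)`
entry of `M_κ` is `c_{κ_ℓ, k+ℓ-1} r_{κ_ℓ}^{k+ℓ+s}` (here 0-based in `ℓ`, `s`);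
`c_{k,0} = 1`. -/
noncomputable def leadConst (m : ℕ) (r : Fin m → ℂ) (c : ℕ → Fin m → ℂ)
    (k j : ℕ) (h : j ≤ m) : ℂ :=
  ∑ κ : Fin j → Fin j,
    Matrix.det (Matrix.of fun s ℓ : Fin j =>
      c (k + (ℓ : ℕ)) (Fin.castLE h (κ ℓ)) *
        r (Fin.castLE h (κ ℓ)) ^ (k + (ℓ : ℕ) + 1 + (s : ℕ)))

/-!
Factor the Casorati matrix as `U(n) W` (`casoratiBasis`, `casoratiCoeff`): the columns of `U(n)`
are the shifted geometric sequences `(r_t^{n+s})_s` and the perturbations `(b_{k+ℓ}^{(n+s)})_s`,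
and `W` holds the coefficients. By Cauchy–Binet, `C_{k,j}^{(n)}` is a sum over selections `κ` of
`j` columns of `U(n)`. The selections of the `j` dominant roots contribute exactly
`(r_1 ⋯ r_j)^n c_{k,j}`; any other injective selection has a product of growth rates strictly below
`|r_1 ⋯ r_j|`, so it is `o(|r_1 ⋯ r_j|^n)`. Hence `C_{k,j}^{(n)} / (r_1 ⋯ r_j)^n → c_{k,j} ≠ 0`,
and the quotient in the theorem is a convergent sequence times `(r_{j+1}/r_j)^n`.
-/

open Filter Topology Asymptotics Matrix

theorem Matrix.det_mul_eq_sum_prod_mul_det_submatrix {n ι R : Type*} [Fintype n] [DecidableEq n]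
    [Fintype ι] [CommRing R] (A : Matrix n ι R) (B : Matrix ι n R) :
    (A * B).det = ∑ κ : n → ι, (∏ i, B (κ i) i) * (A.submatrix id κ).det := by
  rw [← det_transpose]
  have hrows : (A * B)ᵀ = fun i => ∑ x, B x i • Aᵀ x := by
    ext i s
    simp [Matrix.mul_apply, Finset.sum_apply, mul_comm]
  rw [det, hrows]
  refine (detRowAlternating.toMultilinearMap.map_sum fun i x => B x i • Aᵀ x).trans ?_
  refine Finset.sum_congr rfl fun κ _ => ?_
  rw [MultilinearMap.map_smul_univ, smul_eq_mul, ← det_transpose (A.submatrix id κ)]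
  rfl

theorem Matrix.isBigO_det {n α R 𝕜 : Type*} [Fintype n] [DecidableEq n] [SeminormedCommRing R]
    [NormedField 𝕜] {l : Filter α} {A : α → Matrix n n R} {g : n → α → 𝕜}
    (h : ∀ i j, (fun x => A x i j) =O[l] g j) :
    (fun x => (A x).det) =O[l] fun x => ∏ j, g j x := by
  simp only [det_apply']
  refine IsBigO.fun_sum fun σ _ => ?_
  exact (IsBigO.finsetProd fun j _ => h (σ j) j).const_mul_left _

theorem Finset.prod_lt_prod_of_card_eq {ι : Type*} [DecidableEq ι] {S R : Finset ι} {g : ι → ℝ}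
    (hcard : S.card = R.card) (hSR : ¬ S ⊆ R) (hS : ∀ x ∈ S, 0 < g x) (hR : ∀ y ∈ R, 0 < g y)
    (hlt : ∀ x ∈ S, x ∉ R → ∀ y ∈ R, g x < g y) :
    ∏ x ∈ S, g x < ∏ y ∈ R, g y := by
  have hSR' : (S \ R).Nonempty := by
    rwa [Finset.sdiff_nonempty]
  have hRS' : (R \ S).Nonempty := by
    rw [← Finset.card_pos, ← Finset.card_sdiff_comm hcard]
    exact hSR'.card_pos
  obtain ⟨x₀, hx₀, hmax⟩ := Finset.exists_max_image (S \ R) g hSR'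
  obtain ⟨hx₀S, hx₀R⟩ := Finset.mem_sdiff.1 hx₀
  have hsdiff : ∏ x ∈ S \ R, g x < ∏ y ∈ R \ S, g y :=
    calc ∏ x ∈ S \ R, g x ≤ ∏ _x ∈ S \ R, g x₀ :=
          Finset.prod_le_prod (fun x hx => (hS x (Finset.mem_sdiff.1 hx).1).le) hmax
      _ = ∏ _y ∈ R \ S, g x₀ := by
          rw [Finset.prod_const, Finset.prod_const, Finset.card_sdiff_comm hcard]
      _ < ∏ y ∈ R \ S, g y := by
          refine Finset.prod_lt_prod_of_nonempty ?_ ?_ hRS'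
          · exact fun _ _ => hS x₀ hx₀S
          · exact fun y hy => hlt x₀ hx₀S hx₀R y (Finset.mem_sdiff.1 hy).1
  rw [← Finset.prod_inter_mul_prod_sdiff S R, ← Finset.prod_inter_mul_prod_sdiff R S,
    Finset.inter_comm]
  exact mul_lt_mul_of_pos_left hsdiff
    (Finset.prod_pos fun y hy => hR y (Finset.mem_inter.1 hy).1)

theorem tendsto_sum_of_injective {α β γ M : Type*} [Fintype α] [Fintype β] [AddCommMonoid M]
    [TopologicalSpace M] [ContinuousAdd M] {l : Filter γ} {e : α → β} (he : e.Injective)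
    {f : γ → β → M} {g : α → M} (hrange : ∀ a, Tendsto (fun x => f x (e a)) l (𝓝 (g a)))
    (hcompl : ∀ b ∉ Set.range e, Tendsto (fun x => f x b) l (𝓝 0)) :
    Tendsto (fun x => ∑ b, f x b) l (𝓝 (∑ a, g a)) := by
  classical
  rw [Fintype.sum_of_injective e he g (Function.extend e g 0)
    (fun b hb => Function.extend_apply' _ _ _ (by simpa using hb))
    (fun a => (he.extend_apply g 0 a).symm)]
  refine tendsto_finsetSum _ fun b _ => ?_
  by_cases hb : ∃ a, e a = b
  · obtain ⟨a, rfl⟩ := hb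
    rw [he.extend_apply]
    exact hrange a
  · rw [Function.extend_apply' _ _ _ hb]
    exact hcompl b (by simpa using hb)

theorem Matrix.det_submatrix_eq_zero_of_not_injective {n ι R : Type*} [Fintype n] [DecidableEq n]
    [CommRing R] (A : Matrix n ι R) {κ : n → ι} (hκ : ¬ κ.Injective) :
    (A.submatrix id κ).det = 0 := by
  obtain ⟨i, j, hij, hne⟩ := Function.not_injective_iff.1 hκ
  exact det_zero_of_column_eq hne fun s => by simp [hij]

theorem eventually_norm_mul_div_mul_le {C₁ C₂ C₃ C₄ : ℕ → ℂ} {P x y L₁ L₂ L₃ L₄ : ℂ}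
    (hP : P ≠ 0) (hx : x ≠ 0) (hy : y ≠ 0)
    (h₁ : Tendsto (fun n => C₁ n / (P * x * y) ^ n) atTop (𝓝 L₁))
    (h₂ : Tendsto (fun n => C₂ n / P ^ n) atTop (𝓝 L₂))
    (h₃ : Tendsto (fun n => C₃ n / (P * x) ^ n) atTop (𝓝 L₃))
    (h₄ : Tendsto (fun n => C₄ n / (P * x) ^ n) atTop (𝓝 L₄)) (hL₃ : L₃ ≠ 0) (hL₄ : L₄ ≠ 0) :
    ∃ K > 0, ∀ᶠ n in atTop, C₃ n ≠ 0 ∧ C₄ n ≠ 0 ∧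
      ‖C₁ n * C₂ n / (C₃ n * C₄ n)‖ ≤ K * (‖y‖ / ‖x‖) ^ n := by
  have hQ := (h₁.mul h₂).div (h₃.mul h₄) (mul_ne_zero hL₃ hL₄)
  have hO : (fun n => C₁ n * C₂ n / (C₃ n * C₄ n)) =O[atTop] fun n => (y / x) ^ n := by
    refine ((hQ.isBigO_one ℂ).mul (isBigO_refl (fun n => (y / x) ^ n) _)).congr'
      (Eventually.of_forall fun n => ?_) (Eventually.of_forall fun n => one_mul _)
    simp only [Pi.div_apply, div_pow, mul_pow]
    field_simp
  obtain ⟨K, hK, hKO⟩ := hO.exists_pos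
  refine ⟨K, hK, ((h₃.eventually_ne hL₃).and ((h₄.eventually_ne hL₄).and hKO.bound)).mono ?_⟩
  rintro n ⟨h₃n, h₄n, hbound⟩
  refine ⟨(div_ne_zero_iff.1 h₃n).1, (div_ne_zero_iff.1 h₄n).1, ?_⟩
  simpa only [norm_div, norm_pow] using hbound

section CasoratiAsymptotics

variable {m j : ℕ} (r : Fin m → ℂ) (b : ℕ → ℕ → ℂ) (c : ℕ → Fin m → ℂ) (ρ : ℕ → ℝ) (k : ℕ)

noncomputable def casoratiBasis (j n : ℕ) : Matrix (Fin j) (Fin m ⊕ Fin j) ℂ :=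
  fromCols (of fun s t => r t ^ (n + s)) (of fun s ℓ => b (k + ℓ) (n + s))

noncomputable def casoratiCoeff (j : ℕ) : Matrix (Fin m ⊕ Fin j) (Fin j) ℂ :=
  fromRows (of fun t ℓ => c (k + ℓ) t * r t ^ (k + ℓ + 1)) 1

noncomputable def basisRate : Fin m ⊕ Fin j → ℝ :=
  Sum.elim (‖r ·‖) (fun ℓ => ρ (k + ℓ))

def dominantIndex (hj : j ≤ m) : Fin j → Fin m ⊕ Fin j :=
  Sum.inl ∘ Fin.castLE hj

def dominantProd (hj : j ≤ m) : ℂ :=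
  ∏ ℓ : Fin j, r (Fin.castLE hj ℓ)

theorem dominantProd_ne_zero (hj : j ≤ m) (hr0 : ∀ t, r t ≠ 0) : dominantProd r hj ≠ 0 :=
  Finset.prod_ne_zero_iff.2 fun _ _ => hr0 _

theorem dominantProd_succ (h : j + 1 ≤ m) :
    dominantProd r h = dominantProd r (Nat.le_of_succ_le h) * r ⟨j, h⟩ :=
  Fin.prod_univ_castSucc _

theorem casorati_eq_det_casoratiBasis_mul {a : ℕ → ℕ → ℂ}
    (ha : ∀ k n, a k n = (∑ t, c k t * r t ^ (n + k + 1)) + b k n) (n : ℕ) :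
    casorati a k j n = (casoratiBasis r b k j n * casoratiCoeff r c k j).det := by
  rw [casorati, casoratiBasis, casoratiCoeff, fromCols_mul_fromRows, Matrix.mul_one]
  congr 1
  ext s ℓ
  simp only [ha, of_apply, Matrix.add_apply, mul_apply]
  congr 1
  refine Finset.sum_congr rfl fun t _ => ?_
  ring

theorem det_casoratiBasis_submatrix_dominant (hj : j ≤ m) (κ' : Fin j → Fin j) (n : ℕ) :
    ((casoratiBasis r b k j n).submatrix id (dominantIndex hj ∘ κ')).det =
      dominantProd r hj ^ n *
        ((casoratiBasis r b k j 0).submatrix id (dominantIndex hj ∘ κ')).det := by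
  have hscale : (casoratiBasis r b k j n).submatrix id (dominantIndex hj ∘ κ') =
      of fun s ℓ => r (Fin.castLE hj (κ' ℓ)) ^ n *
        (casoratiBasis r b k j 0).submatrix id (dominantIndex hj ∘ κ') s ℓ := by
    ext s ℓ
    simp [casoratiBasis, dominantIndex, pow_add]
  rw [hscale, det_mul_row, Finset.prod_pow]
  by_cases hκ' : κ'.Injective
  · congr 2
    exact Equiv.prod_comp (Equiv.ofBijective κ' hκ'.bijective_of_finite) (r ∘ Fin.castLE hj)
  · rw [det_submatrix_eq_zero_of_not_injective _ fun h => hκ' h.of_comp, mul_zero, mul_zero]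

theorem leadConst_eq_sum (hj : j ≤ m) :
    leadConst m r c k j hj = ∑ κ' : Fin j → Fin j,
      (∏ ℓ, casoratiCoeff r c k j (dominantIndex hj (κ' ℓ)) ℓ) *
        ((casoratiBasis r b k j 0).submatrix id (dominantIndex hj ∘ κ')).det := by
  refine Finset.sum_congr rfl fun κ' _ => ?_
  rw [← det_mul_row]
  congr 1
  ext s ℓ
  simp [casoratiBasis, casoratiCoeff, dominantIndex, pow_add]
  ring

theorem isBigO_casoratiBasis {μ : ℕ → ℝ} (hb : ∀ k n, ‖b k n‖ ≤ μ k * ρ k ^ n) (s : Fin j)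
    (x : Fin m ⊕ Fin j) :
    (fun n => casoratiBasis r b k j n s x) =O[atTop] fun n => basisRate r ρ k x ^ n := by
  rcases x with t | ℓ
  · refine IsBigO.of_bound (‖r t‖ ^ (s : ℕ)) (Eventually.of_forall fun n => ?_)
    simp [casoratiBasis, basisRate, pow_add, mul_comm]
  · refine IsBigO.of_bound ‖μ (k + ℓ) * ρ (k + ℓ) ^ (s : ℕ)‖ (Eventually.of_forall fun n => ?_)
    simp only [casoratiBasis, basisRate, fromCols_apply_inr, of_apply, Sum.elim_inr]
    calc ‖b (k + ℓ) (n + s)‖ ≤ μ (k + ℓ) * ρ (k + ℓ) ^ (s : ℕ) * ρ (k + ℓ) ^ n := by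
          rw [mul_assoc, ← pow_add, add_comm (s : ℕ)]
          exact hb _ _
      _ ≤ _ := by
          rw [← norm_mul, Real.norm_eq_abs]
          exact le_abs_self _

theorem prod_basisRate_lt_norm_dominantProd (hj : j ≤ m) (hr0 : ∀ t, r t ≠ 0)
    (hr : StrictAnti (‖r ·‖)) (hρpos : ∀ k, 0 < ρ k) (hρ : ∀ k t, ρ k < ‖r t‖)
    {κ : Fin j → Fin m ⊕ Fin j} (hinj : κ.Injective)
    (hκ : κ ∉ Set.range (dominantIndex hj ∘ ·)) :
    ∏ ℓ, basisRate r ρ k (κ ℓ) < ‖dominantProd r hj‖ := by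
  classical
  have hpos : ∀ x : Fin m ⊕ Fin j, 0 < basisRate r ρ k x := by
    rintro (t | ℓ)
    exacts [norm_pos_iff.2 (hr0 t), hρpos _]
  have hdom : (dominantIndex hj).Injective := Sum.inl_injective.comp (Fin.castLE_injective hj)
  have hnorm : ‖dominantProd r hj‖ = ∏ ℓ, basisRate r ρ k (dominantIndex hj ℓ) := by
    simp [dominantProd, basisRate, dominantIndex, norm_prod]
  rw [hnorm, ← Finset.prod_image hinj.injOn, ← Finset.prod_image hdom.injOn]
  refine Finset.prod_lt_prod_of_card_eq ?_ ?_ (fun x _ => hpos x) (fun x _ => hpos x) ?_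
  · rw [Finset.card_image_of_injective _ hinj, Finset.card_image_of_injective _ hdom]
  · intro hsub
    have hval : ∀ ℓ, ∃ ℓ', dominantIndex hj ℓ' = κ ℓ := fun ℓ => by
      simpa using hsub (Finset.mem_image_of_mem κ (Finset.mem_univ ℓ))
    choose κ' hκ' using hval
    exact hκ ⟨κ', funext hκ'⟩
  · intro x _ hxR y hyR
    obtain ⟨ℓ₀, -, rfl⟩ := Finset.mem_image.1 hyR
    rcases x with t | ℓ
    · refine hr (show Fin.castLE hj ℓ₀ < t from ?_)
      by_contra! hle
      exact hxR (Finset.mem_image.2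
        ⟨⟨t, by simp [Fin.le_def] at hle; omega⟩, Finset.mem_univ _, rfl⟩)
    · exact hρ _ _

theorem isLittleO_det_casoratiBasis_submatrix {μ : ℕ → ℝ} (hj : j ≤ m) (hr0 : ∀ t, r t ≠ 0)
    (hr : StrictAnti (‖r ·‖)) (hρpos : ∀ k, 0 < ρ k) (hρ : ∀ k t, ρ k < ‖r t‖)
    (hb : ∀ k n, ‖b k n‖ ≤ μ k * ρ k ^ n) {κ : Fin j → Fin m ⊕ Fin j} (hinj : κ.Injective)
    (hκ : κ ∉ Set.range (dominantIndex hj ∘ ·)) :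
    (fun n => ((casoratiBasis r b k j n).submatrix id κ).det) =o[atTop]
      fun n => dominantProd r hj ^ n := by
  have hO : (fun n => ((casoratiBasis r b k j n).submatrix id κ).det) =O[atTop]
      fun n => (∏ ℓ, basisRate r ρ k (κ ℓ)) ^ n := by
    refine (isBigO_det (A := fun n => (casoratiBasis r b k j n).submatrix id κ)
      (g := fun ℓ n => basisRate r ρ k (κ ℓ) ^ n) fun s ℓ => ?_).congr_right
      fun n => Finset.prod_pow _ _ _
    exact isBigO_casoratiBasis r b ρ k hb s (κ ℓ)
  refine hO.trans_isLittleO ?_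
  rw [← isLittleO_norm_right]
  simp only [norm_pow]
  refine isLittleO_pow_pow_of_lt_left (Finset.prod_nonneg fun ℓ _ => ?_)
    (prod_basisRate_lt_norm_dominantProd r ρ k hj hr0 hr hρpos hρ hinj hκ)
  rcases κ ℓ with t | ℓ'
  exacts [norm_nonneg _, (hρpos _).le]

theorem tendsto_casorati_div_dominantProd_pow {a : ℕ → ℕ → ℂ} {μ : ℕ → ℝ} (hj : j ≤ m)
    (hr0 : ∀ t, r t ≠ 0) (hr : StrictAnti (‖r ·‖)) (hρpos : ∀ k, 0 < ρ k)
    (hρ : ∀ k t, ρ k < ‖r t‖) (hb : ∀ k n, ‖b k n‖ ≤ μ k * ρ k ^ n)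
    (ha : ∀ k n, a k n = (∑ t, c k t * r t ^ (n + k + 1)) + b k n) :
    Tendsto (fun n => casorati a k j n / dominantProd r hj ^ n) atTop
      (𝓝 (leadConst m r c k j hj)) := by
  have hP := dominantProd_ne_zero r hj hr0
  have hdom : (dominantIndex hj ∘ · : (Fin j → Fin j) → _).Injective :=
    (Sum.inl_injective.comp (Fin.castLE_injective hj)).comp_left
  simp only [casorati_eq_det_casoratiBasis_mul r b c k ha, det_mul_eq_sum_prod_mul_det_submatrix,
    Finset.sum_div, leadConst_eq_sum r b c k hj]
  refine tendsto_sum_of_injective hdom (fun κ' => ?_) (fun κ hκ => ?_)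
  · refine tendsto_const_nhds.congr fun n => ?_
    rw [det_casoratiBasis_submatrix_dominant r b k hj κ' n]
    field_simp
    exact mul_comm _ _
  · by_cases hinj : κ.Injective
    · simp only [mul_div_assoc]
      simpa using ((isLittleO_det_casoratiBasis_submatrix r b ρ k hj hr0 hr hρpos hρ hb hinj
        hκ).tendsto_div_nhds_zero).const_mul (∏ ℓ, casoratiCoeff r c k j (κ ℓ) ℓ)
    · simp [det_submatrix_eq_zero_of_not_injective _ hinj]

end CasoratiAsymptotics

theorem dhLV_auxiliary_rate
    (M m : ℕ) (hm : 2 ≤ m)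
    (a b : ℕ → ℕ → ℂ)
    (r : Fin m → ℂ) (c : ℕ → Fin m → ℂ) (ρ μ : ℕ → ℝ)
    (hr0 : ∀ ℓ, r ℓ ≠ 0)
    (hrdec : ∀ ℓ₁ ℓ₂ : Fin m, ℓ₁ < ℓ₂ → ‖r ℓ₂‖ < ‖r ℓ₁‖)
    (hρpos : ∀ k, 0 < ρ k)
    (hρlt : ∀ k, ρ k < ‖r ⟨m - 1, by omega⟩‖)
    (hb : ∀ k n : ℕ, ‖b k n‖ ≤ μ k * ρ k ^ n)
    (ha : ∀ k n : ℕ, a k n = (∑ ℓ, c k ℓ * r ℓ ^ (n + k + 1)) + b k n)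
    (hcnz : ∀ k ≤ M, ∀ j, ∀ h : j ≤ m, leadConst m r c k j h ≠ 0) :
    ∀ i < M, ∀ j, ∀ hj1 : 1 ≤ j, ∀ hjm : j ≤ m - 1,
      ∃ K > 0, ∃ N : ℕ, ∀ n ≥ N,
        casorati a i j n ≠ 0 ∧ casorati a (i + 1) j n ≠ 0 ∧
        ‖casorati a i (j + 1) n * casorati a (i + 1) (j - 1) n /
            (casorati a i j n * casorati a (i + 1) j n)‖ ≤
          K * (‖r ⟨j, by omega⟩‖ / ‖r ⟨j - 1, by omega⟩‖) ^ n := by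
  intro i hi j hj1 hjm
  obtain ⟨j, rfl⟩ : ∃ j', j = j' + 1 := ⟨j - 1, by omega⟩
  have hr : StrictAnti (‖r ·‖) := fun _ _ h => hrdec _ _ h
  have hρ : ∀ k t, ρ k < ‖r t‖ := fun k t =>
    (hρlt k).trans_le (hr.antitone (Fin.le_def.2 (by simp; omega)))
  have hlim : ∀ k (d : ℕ) (hd : d ≤ m), Tendsto (fun n => casorati a k d n / dominantProd r hd ^ n)
      atTop (𝓝 (leadConst m r c k d hd)) := fun k d hd =>
    tendsto_casorati_div_dominantProd_pow r b c ρ k hd hr0 hr hρpos hρ hb ha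
  have h₁ := hlim i (j + 2) (by omega)
  have h₃ := hlim i (j + 1) (by omega)
  have h₄ := hlim (i + 1) (j + 1) (by omega)
  rw [dominantProd_succ r (j := j + 1), dominantProd_succ r (j := j)] at h₁
  rw [dominantProd_succ r (j := j)] at h₃ h₄
  obtain ⟨K, hK, hev⟩ := eventually_norm_mul_div_mul_le (dominantProd_ne_zero r _ hr0)
    (hr0 _) (hr0 _) h₁ (hlim (i + 1) j (by omega)) h₃ h₄ (hcnz i hi.le _ _) (hcnz (i + 1) hi _ _)
  obtain ⟨N, hN⟩ := eventually_atTop.1 hev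
  exact ⟨K, hK, N, hN⟩
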